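/- arXiv:1908.05896 — 2 statements merged into one kernel-verified Lean document; each statement's English description precedes it below -/
import Mathlib

section
/- Let n ≥ 1, let α = (α_1, …, α_n) and α* = (α*_1, …, α*_n) be n-tuples of positive real numbers each arranged in increasing order, and suppose α* is majorized by α. Then for every real number t with 0 < t < 1, ∑_{k=1}^n α*_k t^(α*_k − 1) / (1 − t^(α*_k)) ≤ ∑_{k=1}^n α_k t^(α_k − 1) / (1 − t^(α_k)). -/
/-!
With `c = -log t`, the summand `a t^(a-1) / (1 - t^a)` equals `ψ(c a) / (c t)` for
`ψ(x) = x / (eˣ - 1)`, which is convex on `(0, ∞)`: its second derivative has the sign of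
`2 + x + eˣ (x - 2) = eˣ ((x + 2) e⁻ˣ + x - 2)`, and the bracket vanishes at `0` and increases
because `x + 1 ≤ eˣ`. The inequality is then of Karamata type for `ψ`:
adding the tangent lines of `ψ` at the points `c α*_k` leaves the correction
`∑ ψ'(c α*_k) (c α_k - c α*_k)`, which is nonnegative by Abel summation, because `ψ'` increases
along the increasing `α*` while the partial sums of `α - α*` are `≤ 0` and their total is `0`.
-/

open Real Finset

theorem sum_range_mul_nonneg_of_sum_range_nonpos {R : Type*} [CommRing R] [PartialOrder R]
    [IsOrderedRing R] {n : ℕ} {c d : ℕ → R} (hc : MonotoneOn c (Set.Iio n))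
    (hd : ∀ i < n, ∑ k ∈ range i, d k ≤ 0) (hd_total : ∑ k ∈ range n, d k = 0) :
    0 ≤ ∑ k ∈ range n, c k * d k := by
  have hparts := sum_range_by_parts c d n
  simp only [smul_eq_mul] at hparts
  rw [hparts, hd_total, mul_zero, zero_sub, neg_nonneg]
  refine sum_nonpos fun i hi => ?_
  have hi_succ : i + 1 < n := by have := mem_range.mp hi; omega
  have hc_step : c i ≤ c (i + 1) := hc (Nat.lt_of_succ_lt hi_succ) hi_succ (Nat.le_succ i)
  exact mul_nonpos_of_nonneg_of_nonpos (sub_nonneg.mpr hc_step) (hd (i + 1) hi_succ)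

theorem ConvexOn.add_deriv_mul_sub_le {s : Set ℝ} {f : ℝ → ℝ} (hf : ConvexOn ℝ s f) {x y : ℝ}
    (hx : x ∈ s) (hy : y ∈ s) (hfd : DifferentiableAt ℝ f x) :
    f x + deriv f x * (y - x) ≤ f y := by
  rcases lt_trichotomy x y with hxy | rfl | hyx
  · have := hf.deriv_le_slope hx hy hxy hfd
    rw [slope_def_field, le_div_iff₀ (sub_pos.mpr hxy)] at this
    linarith
  · simp
  · have := hf.slope_le_deriv hy hx hyx hfd
    rw [slope_def_field, div_le_iff₀ (sub_pos.mpr hyx)] at this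
    linarith

theorem ConvexOn.sum_le_sum_of_majorized {s : Set ℝ} {f : ℝ → ℝ} (hf : ConvexOn ℝ s f)
    (hfd : ∀ x ∈ s, DifferentiableAt ℝ f x) {n : ℕ} {x y : ℕ → ℝ} (hx : ∀ k < n, x k ∈ s)
    (hy : ∀ k < n, y k ∈ s) (hy_mono : MonotoneOn y (Set.Iio n))
    (hmaj : ∀ i < n, ∑ k ∈ range i, x k ≤ ∑ k ∈ range i, y k)
    (hsum : ∑ k ∈ range n, y k = ∑ k ∈ range n, x k) :
    ∑ k ∈ range n, f (y k) ≤ ∑ k ∈ range n, f (x k) := by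
  have hcorr : 0 ≤ ∑ k ∈ range n, deriv f (y k) * (x k - y k) := by
    refine sum_range_mul_nonneg_of_sum_range_nonpos ?_ (fun i hi => ?_) ?_
    · intro i hi j hj hij
      exact hf.monotoneOn_deriv hfd (hy i hi) (hy j hj) (hy_mono hi hj hij)
    · rw [sum_sub_distrib]; linarith [hmaj i hi]
    · rw [sum_sub_distrib, hsum, sub_self]
  have htangent : ∑ k ∈ range n, (f (y k) + deriv f (y k) * (x k - y k)) ≤
      ∑ k ∈ range n, f (x k) := by
    refine sum_le_sum fun k hk => ?_
    rw [mem_range] at hk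
    exact hf.add_deriv_mul_sub_le (hy k hk) (hx k hk) (hfd _ (hy k hk))
  rw [sum_add_distrib] at htangent
  linarith

theorem two_add_add_exp_mul_sub_two_nonneg {x : ℝ} (hx : 0 ≤ x) :
    0 ≤ 2 + x + exp x * (x - 2) := by
  set k : ℝ → ℝ := fun y => (y + 2) * exp (-y) + y - 2
  have hk_deriv : ∀ y, HasDerivAt k (1 - (y + 1) * exp (-y)) y := by
    intro y
    have := (((hasDerivAt_id' y).add_const 2).mul (hasDerivAt_neg y).exp).add (hasDerivAt_id' y)
    refine (this.sub_const 2).congr_deriv ?_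
    ring
  have hk_mono : MonotoneOn k (Set.Ici 0) := by
    refine monotoneOn_of_hasDerivWithinAt_nonneg (convex_Ici 0)
      (fun y _ => (hk_deriv y).continuousAt.continuousWithinAt)
      (fun y _ => (hk_deriv y).hasDerivWithinAt) fun y _ => ?_
    have := mul_le_mul_of_nonneg_right (add_one_le_exp y) (exp_pos (-y)).le
    rw [← exp_add, add_neg_cancel, exp_zero] at this
    linarith
  have hk : k 0 ≤ k x := hk_mono Set.self_mem_Ici hx hx
  have hk0 : k 0 = 0 := by norm_num [k]
  calc (0 : ℝ) ≤ exp x * k x := mul_nonneg (exp_pos x).le (hk0 ▸ hk)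
    _ = 2 + x + exp x * (x - 2) := by
      simp only [k]
      rw [mul_sub, mul_add, mul_left_comm, ← exp_add, add_neg_cancel, exp_zero]
      ring

theorem hasDerivAt_div_exp_sub_one {x : ℝ} (hx : x ≠ 0) :
    HasDerivAt (fun y => y / (exp y - 1)) ((exp x - 1 - x * exp x) / (exp x - 1) ^ 2) x := by
  have hne : exp x - 1 ≠ 0 := sub_ne_zero.mpr ((exp_eq_one_iff x).not.mpr hx)
  refine ((hasDerivAt_id' x).div ((hasDerivAt_exp x).sub_const 1) hne).congr_deriv ?_
  ring

theorem hasDerivAt_deriv_div_exp_sub_one {x : ℝ} (hx : x ≠ 0) :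
    HasDerivAt (fun y => (exp y - 1 - y * exp y) / (exp y - 1) ^ 2)
      (exp x * (2 + x + exp x * (x - 2)) / (exp x - 1) ^ 3) x := by
  have hne : exp x - 1 ≠ 0 := sub_ne_zero.mpr ((exp_eq_one_iff x).not.mpr hx)
  have hnum := ((hasDerivAt_exp x).sub_const 1).fun_sub
    ((hasDerivAt_id' x).fun_mul (hasDerivAt_exp x))
  have hden := ((hasDerivAt_exp x).sub_const 1).fun_pow 2
  refine (hnum.div hden (pow_ne_zero 2 hne)).congr_deriv ?_
  field_simp
  ring

theorem convexOn_div_exp_sub_one : ConvexOn ℝ (Set.Ioi 0) (fun x => x / (exp x - 1)) := by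
  refine convexOn_of_hasDerivWithinAt2_nonneg (convex_Ioi 0)
    (fun x hx => (hasDerivAt_div_exp_sub_one (ne_of_gt hx)).continuousAt.continuousWithinAt)
    (fun x hx => (hasDerivAt_div_exp_sub_one (ne_of_gt (interior_subset hx))).hasDerivWithinAt)
    (fun x hx =>
      (hasDerivAt_deriv_div_exp_sub_one (ne_of_gt (interior_subset hx))).hasDerivWithinAt)
    fun x hx => ?_
  rw [interior_Ioi] at hx
  have hpos : 0 < exp x - 1 := sub_pos.mpr (one_lt_exp_iff.mpr hx)
  have := two_add_add_exp_mul_sub_two_nonneg (le_of_lt hx)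
  positivity

theorem mul_rpow_sub_one_div_one_sub_rpow {t a : ℝ} (ht0 : 0 < t) (ht1 : t ≠ 1) (ha : a ≠ 0) :
    a * t ^ (a - 1) / (1 - t ^ a) = (-log t * t)⁻¹ * (-log t * a / (exp (-log t * a) - 1)) := by
  have hlog : log t ≠ 0 := log_ne_zero_of_pos_of_ne_one ht0 ht1
  have hexp : exp (-log t * a) = (t ^ a)⁻¹ := by
    rw [rpow_def_of_pos ht0, ← exp_neg]
    ring_nf
  have hta : t ^ a ≠ 1 := fun h => mul_ne_zero ha hlog (by rw [← log_rpow ht0, h, log_one])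
  have hden₁ : 1 - t ^ a ≠ 0 := sub_ne_zero.mpr hta.symm
  have hden₂ : (t ^ a)⁻¹ - 1 ≠ 0 := sub_ne_zero.mpr (inv_ne_one.mpr hta)
  rw [hexp, rpow_sub ht0, rpow_one]
  field_simp

theorem sum_tau_le_of_majorized_general (n : ℕ) (α αs : ℕ → ℝ)
    (hαpos : ∀ k < n, 0 < α k) (hαspos : ∀ k < n, 0 < αs k)
    (hαsmono : ∀ i, ∀ j, i ≤ j → j < n → αs i ≤ αs j)
    (hmaj : ∀ i, 1 ≤ i → i ≤ n - 1 →
      ∑ k ∈ Finset.range i, α k ≤ ∑ k ∈ Finset.range i, αs k)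
    (hsum : ∑ k ∈ Finset.range n, αs k = ∑ k ∈ Finset.range n, α k)
    (t : ℝ) (ht0 : 0 < t) (ht1 : t < 1) :
    ∑ k ∈ Finset.range n, αs k * t ^ (αs k - 1) / (1 - t ^ αs k) ≤
      ∑ k ∈ Finset.range n, α k * t ^ (α k - 1) / (1 - t ^ α k) := by
  set c := -log t
  have hc : 0 < c := neg_pos.mpr (log_neg ht0 ht1)
  have hrewrite : ∀ x : ℕ → ℝ, (∀ k < n, 0 < x k) →
      ∑ k ∈ range n, x k * t ^ (x k - 1) / (1 - t ^ x k) =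
        (c * t)⁻¹ * ∑ k ∈ range n, c * x k / (exp (c * x k) - 1) := fun x hx => by
    rw [mul_sum]
    exact sum_congr rfl fun k hk =>
      mul_rpow_sub_one_div_one_sub_rpow ht0 ht1.ne (hx k (mem_range.mp hk)).ne'
  rw [hrewrite αs hαspos, hrewrite α hαpos]
  refine mul_le_mul_of_nonneg_left ?_ (inv_nonneg.mpr (mul_pos hc ht0).le)
  refine convexOn_div_exp_sub_one.sum_le_sum_of_majorized
    (fun x hx => (hasDerivAt_div_exp_sub_one (ne_of_gt hx)).differentiableAt)
    (fun k hk => mul_pos hc (hαpos k hk)) (fun k hk => mul_pos hc (hαspos k hk))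
    (fun i hi j hj hij => mul_le_mul_of_nonneg_left (hαsmono i j hij hj) hc.le)
    (fun i hi => ?_) (by rw [← mul_sum, ← mul_sum, hsum])
  rw [← mul_sum, ← mul_sum]
  rcases Nat.eq_zero_or_pos i with rfl | hi0
  · simp
  · exact mul_le_mul_of_nonneg_left (hmaj i hi0 (by omega)) hc.le

/-- Schur-convexity step in Theorem 3.1: if the increasing tuple `αs` is majorized by the
increasing tuple `α` (both with positive entries), then for every `t ∈ (0,1)`,
`∑ αs_k t^(αs_k - 1)/(1 - t^(αs_k)) ≤ ∑ α_k t^(α_k - 1)/(1 - t^(α_k))`. -/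
theorem sum_tau_le_of_majorized (n : ℕ) (hn : 1 ≤ n) (α αs : ℕ → ℝ)
    (hαpos : ∀ k < n, 0 < α k) (hαspos : ∀ k < n, 0 < αs k)
    (hαmono : ∀ i, ∀ j, i ≤ j → j < n → α i ≤ α j)
    (hαsmono : ∀ i, ∀ j, i ≤ j → j < n → αs i ≤ αs j)
    (hmaj : ∀ i, 1 ≤ i → i ≤ n - 1 →
      ∑ k ∈ Finset.range i, α k ≤ ∑ k ∈ Finset.range i, αs k)
    (hsum : ∑ k ∈ Finset.range n, αs k = ∑ k ∈ Finset.range n, α k)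
    (t : ℝ) (ht0 : 0 < t) (ht1 : t < 1) :
    ∑ k ∈ Finset.range n, αs k * t ^ (αs k - 1) / (1 - t ^ αs k) ≤
      ∑ k ∈ Finset.range n, α k * t ^ (α k - 1) / (1 - t ^ α k) :=
  sum_tau_le_of_majorized_general n α αs hαpos hαspos hαsmono hmaj hsum t ht0 ht1
end

section
/- Let n ≥ 1, let α > 0, let θ = (θ_1, …, θ_n) and θ* = (θ*_1, …, θ*_n) be n-tuples of positive real numbers each arranged in increasing order with θ weakly submajorized by θ*, and let u be a real number with 0 < u < 1. Then ∏_{k=1}^n (u^(θ*_k) (2 − u^(θ*_k)))^α ≤ ∏_{k=1}^n (u^(θ_k) (2 − u^(θ_k)))^α. -/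
/-!
Take logarithms: the claim becomes `∑ g(θ_k) ≤ ∑ g(θ*_k)` for `g(t) = -log(u^t (2 - u^t))`,
whose derivative `log u · (2/(2 - u^t) - 2)` is nonnegative and increasing on `[0, ∞)`. For an
increasing convex differentiable `g`, convexity gives
`g(θ*_k) - g(θ_k) ≥ g'(θ_k)(θ*_k - θ_k)`,
and since `g'(θ_k)` is nonnegative and increasing in `k` while all tail sums of `θ* - θ` are
nonnegative, Abel summation makes `∑ g'(θ_k)(θ*_k - θ_k)` nonnegative.
-/

open Finset

theorem sum_mul_nonneg_of_monotoneOn_of_tail_sum_nonneg (n : ℕ) (C d : ℕ → ℝ)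
    (hC : MonotoneOn C (Set.Iio n)) (hC_nonneg : ∀ i < n, 0 ≤ C i)
    (hd : ∀ i < n, 0 ≤ ∑ k ∈ Ico i n, d k) :
    0 ≤ ∑ k ∈ range n, C k * d k := by
  induction n generalizing C d with
  | zero => simp
  | succ n ih =>
    -- Split `C = C 0 + (C - C 0)`; the second part vanishes at `0` and shifts down by one.
    have hsplit : ∑ k ∈ range (n + 1), C k * d k =
        C 0 * ∑ k ∈ Ico 0 (n + 1), d k +
          ∑ k ∈ range n, (C (k + 1) - C 0) * d (k + 1) := by
      rw [← range_eq_Ico, mul_sum, sum_range_succ', sum_range_succ']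
      simp only [sub_mul, sum_sub_distrib]
      ring
    have hshift : 0 ≤ ∑ k ∈ range n, (C (k + 1) - C 0) * d (k + 1) := by
      refine ih _ _ (fun i hi j hj hij => ?_) (fun i hi => ?_) (fun i hi => ?_)
      · exact sub_le_sub_right (hC (by simpa using hi) (by simpa using hj) (by omega)) _
      · exact sub_nonneg.2 (hC (by simp) (by simpa using hi) (by omega))
      · simpa only [sum_Ico_add'] using hd (i + 1) (by omega)
    rw [hsplit]
    exact add_nonneg (mul_nonneg (hC_nonneg 0 (by omega)) (hd 0 (by omega))) hshift

theorem ConvexOn.deriv_mul_sub_le {S : Set ℝ} {f : ℝ → ℝ} (hf : ConvexOn ℝ S f)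
    {x y : ℝ} (hx : x ∈ S) (hy : y ∈ S) (hfx : DifferentiableAt ℝ f x) :
    deriv f x * (y - x) ≤ f y - f x := by
  rcases lt_trichotomy x y with hxy | rfl | hyx
  · have := hf.deriv_le_slope hx hy hxy hfx
    rwa [slope_def_field, le_div_iff₀ (sub_pos.2 hxy)] at this
  · simp
  · have := hf.slope_le_deriv hy hx hyx hfx
    rw [slope_def_field, div_le_iff₀ (sub_pos.2 hyx)] at this
    linarith

/-- Tomić–Weyl inequality for weak submajorization from above, with only `a` sorted. -/
theorem ConvexOn.sum_le_sum_of_tail_sum_le {S : Set ℝ} {f : ℝ → ℝ} (hf : ConvexOn ℝ S f)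
    (hfd : ∀ x ∈ S, DifferentiableAt ℝ f x) (hf' : ∀ x ∈ S, 0 ≤ deriv f x)
    (n : ℕ) (a b : ℕ → ℝ) (ha : ∀ k < n, a k ∈ S) (hb : ∀ k < n, b k ∈ S)
    (ha_mono : MonotoneOn a (Set.Iio n))
    (hab : ∀ i < n, ∑ k ∈ Ico i n, a k ≤ ∑ k ∈ Ico i n, b k) :
    ∑ k ∈ range n, f (a k) ≤ ∑ k ∈ range n, f (b k) := by
  have hderiv_mono : MonotoneOn (fun k => deriv f (a k)) (Set.Iio n) :=
    fun i hi j hj hij => hf.monotoneOn_deriv hfd (ha i hi) (ha j hj) (ha_mono hi hj hij)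
  have habel : 0 ≤ ∑ k ∈ range n, deriv f (a k) * (b k - a k) :=
    sum_mul_nonneg_of_monotoneOn_of_tail_sum_nonneg n _ _ hderiv_mono
      (fun k hk => hf' _ (ha k hk))
      (fun i hi => by simpa only [sum_sub_distrib, sub_nonneg] using hab i hi)
  have hsubgrad : ∑ k ∈ range n, deriv f (a k) * (b k - a k) ≤
      ∑ k ∈ range n, (f (b k) - f (a k)) :=
    sum_le_sum fun k hk =>
      have hk : k < n := mem_range.1 hk
      hf.deriv_mul_sub_le (ha k hk) (hb k hk) (hfd _ (ha k hk))
  rw [sum_sub_distrib] at hsubgrad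
  linarith

section ToppLeone

variable {u : ℝ}

/-- `-log` of the Topp–Leone distribution function `u^t (2 - u^t)`, where `u = G(x)`. -/
noncomputable def negLogTL (u t : ℝ) : ℝ := -Real.log (u ^ t * (2 - u ^ t))

theorem hasDerivAt_negLogTL (hu : 0 < u) {t : ℝ} (ht : u ^ t < 2) :
    HasDerivAt (negLogTL u) (Real.log u * (2 / (2 - u ^ t) - 2)) t := by
  have hpow : HasDerivAt (fun t => u ^ t) (u ^ t * Real.log u) t :=
    (Real.hasStrictDerivAt_const_rpow hu t).hasDerivAt
  have hpos : 0 < u ^ t := Real.rpow_pos_of_pos hu t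
  have hne : 2 - u ^ t ≠ 0 := by linarith
  refine ((hpow.mul (hpow.const_sub 2)).log (mul_ne_zero hpos.ne' hne)).neg.congr_deriv ?_
  simp only [Pi.mul_apply]
  field_simp
  ring

theorem hasDerivAt_negLogTL_of_nonneg (hu0 : 0 < u) (hu1 : u < 1) {t : ℝ} (ht : 0 ≤ t) :
    HasDerivAt (negLogTL u) (Real.log u * (2 / (2 - u ^ t) - 2)) t :=
  hasDerivAt_negLogTL hu0 ((Real.rpow_le_one hu0.le hu1.le ht).trans_lt one_lt_two)

theorem monotoneOn_deriv_negLogTL (hu0 : 0 < u) (hu1 : u < 1) :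
    MonotoneOn (deriv (negLogTL u)) (Set.Ici 0) := by
  intro s hs t ht hst
  rw [(hasDerivAt_negLogTL_of_nonneg hu0 hu1 hs).deriv,
    (hasDerivAt_negLogTL_of_nonneg hu0 hu1 ht).deriv]
  have hts : u ^ t ≤ u ^ s := Real.rpow_le_rpow_of_exponent_ge hu0 hu1.le hst
  have hs1 : u ^ s ≤ 1 := Real.rpow_le_one hu0.le hu1.le hs
  refine mul_le_mul_of_nonpos_left ?_ (Real.log_neg hu0 hu1).le
  gcongr
  linarith

theorem convexOn_negLogTL (hu0 : 0 < u) (hu1 : u < 1) : ConvexOn ℝ (Set.Ici 0) (negLogTL u) := by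
  have hd : ∀ t ∈ Set.Ici (0 : ℝ), DifferentiableAt ℝ (negLogTL u) t :=
    fun t ht => (hasDerivAt_negLogTL_of_nonneg hu0 hu1 ht).differentiableAt
  refine MonotoneOn.convexOn_of_deriv (convex_Ici 0)
    (fun t ht => (hd t ht).continuousAt.continuousWithinAt) ?_ ?_ <;> rw [interior_Ici]
  · exact fun t ht => (hd t (Set.Ioi_subset_Ici_self ht)).differentiableWithinAt
  · exact (monotoneOn_deriv_negLogTL hu0 hu1).mono Set.Ioi_subset_Ici_self

theorem deriv_negLogTL_nonneg (hu0 : 0 < u) (hu1 : u < 1) {t : ℝ} (ht : 0 ≤ t) :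
    0 ≤ deriv (negLogTL u) t := by
  rw [(hasDerivAt_negLogTL_of_nonneg hu0 hu1 ht).deriv]
  have h1 : u ^ t ≤ 1 := Real.rpow_le_one hu0.le hu1.le ht
  refine mul_nonneg_of_nonpos_of_nonpos (Real.log_neg hu0 hu1).le ?_
  rw [sub_nonpos, div_le_iff₀ (by linarith)]
  linarith

theorem exp_neg_negLogTL (hu0 : 0 < u) (hu1 : u < 1) {t : ℝ} (ht : 0 ≤ t) :
    Real.exp (-negLogTL u t) = u ^ t * (2 - u ^ t) := by
  have h1 : u ^ t ≤ 1 := Real.rpow_le_one hu0.le hu1.le ht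
  rw [negLogTL, neg_neg, Real.exp_log (mul_pos (Real.rpow_pos_of_pos hu0 t) (by linarith))]

theorem sum_negLogTL_le_of_tail_sum_le (hu0 : 0 < u) (hu1 : u < 1) (n : ℕ) (a b : ℕ → ℝ)
    (ha : ∀ k < n, 0 ≤ a k) (hb : ∀ k < n, 0 ≤ b k) (ha_mono : MonotoneOn a (Set.Iio n))
    (hab : ∀ i < n, ∑ k ∈ Ico i n, a k ≤ ∑ k ∈ Ico i n, b k) :
    ∑ k ∈ range n, negLogTL u (a k) ≤ ∑ k ∈ range n, negLogTL u (b k) :=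
  (convexOn_negLogTL hu0 hu1).sum_le_sum_of_tail_sum_le
    (fun _ ht => (hasDerivAt_negLogTL_of_nonneg hu0 hu1 ht).differentiableAt)
    (fun _ ht => deriv_negLogTL_nonneg hu0 hu1 ht) n a b ha hb ha_mono hab

theorem prod_eq_exp_neg_sum_negLogTL (hu0 : 0 < u) (hu1 : u < 1) (n : ℕ) (a : ℕ → ℝ)
    (ha : ∀ k < n, 0 ≤ a k) :
    ∏ k ∈ range n, u ^ a k * (2 - u ^ a k) =
      Real.exp (-∑ k ∈ range n, negLogTL u (a k)) := by
  rw [← sum_neg_distrib, Real.exp_sum]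
  exact prod_congr rfl fun k hk => (exp_neg_negLogTL hu0 hu1 (ha k (mem_range.1 hk))).symm

end ToppLeone

theorem prod_cdf_le_of_weakly_submajorized_general (n : ℕ) (α : ℝ) (hα : 0 < α)
    (θ θs : ℕ → ℝ)
    (hθpos : ∀ k < n, 0 < θ k) (hθspos : ∀ k < n, 0 < θs k)
    (hθmono : ∀ i, ∀ j, i ≤ j → j < n → θ i ≤ θ j)
    (hsubmaj : ∀ i < n, ∑ k ∈ Finset.Ico i n, θ k ≤ ∑ k ∈ Finset.Ico i n, θs k)
    (u : ℝ) (hu0 : 0 < u) (hu1 : u < 1) :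
    ∏ k ∈ Finset.range n, (u ^ θs k * (2 - u ^ θs k)) ^ α ≤
      ∏ k ∈ Finset.range n, (u ^ θ k * (2 - u ^ θ k)) ^ α := by
  have hθ : ∀ k < n, 0 ≤ θ k := fun k hk => (hθpos k hk).le
  have hθs : ∀ k < n, 0 ≤ θs k := fun k hk => (hθspos k hk).le
  have hsum := sum_negLogTL_le_of_tail_sum_le hu0 hu1 n θ θs hθ hθs
    (fun i hi j hj hij => hθmono i j hij hj) hsubmaj
  rw [Real.finsetProd_rpow, Real.finsetProd_rpow, prod_eq_exp_neg_sum_negLogTL hu0 hu1 n θ hθ,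
    prod_eq_exp_neg_sum_negLogTL hu0 hu1 n θs hθs]
  · exact Real.rpow_le_rpow (Real.exp_pos _).le (Real.exp_le_exp.2 (neg_le_neg hsum)) hα.le
  · exact fun k hk => exp_neg_negLogTL hu0 hu1 (hθ k (mem_range.1 hk)) ▸ (Real.exp_pos _).le
  · exact fun k hk => exp_neg_negLogTL hu0 hu1 (hθs k (mem_range.1 hk)) ▸ (Real.exp_pos _).le

/-- Theorem 3.2 stated pointwise: if the increasing tuple `θ` is weakly submajorized by the
increasing tuple `θs` (both with positive entries), then for every `u ∈ (0,1)` and `α > 0`,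
`∏ (u^(θs_k)(2 - u^(θs_k)))^α ≤ ∏ (u^(θ_k)(2 - u^(θ_k)))^α`. -/
theorem prod_cdf_le_of_weakly_submajorized (n : ℕ) (hn : 1 ≤ n) (α : ℝ) (hα : 0 < α)
    (θ θs : ℕ → ℝ)
    (hθpos : ∀ k < n, 0 < θ k) (hθspos : ∀ k < n, 0 < θs k)
    (hθmono : ∀ i, ∀ j, i ≤ j → j < n → θ i ≤ θ j)
    (hθsmono : ∀ i, ∀ j, i ≤ j → j < n → θs i ≤ θs j)
    (hsubmaj : ∀ i < n, ∑ k ∈ Finset.Ico i n, θ k ≤ ∑ k ∈ Finset.Ico i n, θs k)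
    (u : ℝ) (hu0 : 0 < u) (hu1 : u < 1) :
    ∏ k ∈ Finset.range n, (u ^ θs k * (2 - u ^ θs k)) ^ α ≤
      ∏ k ∈ Finset.range n, (u ^ θ k * (2 - u ^ θ k)) ^ α :=
  prod_cdf_le_of_weakly_submajorized_general n α hα θ θs hθpos hθspos hθmono hsubmaj u hu0 hu1
end
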